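/- arXiv:1312.6340 — 6 statements merged into one kernel-verified Lean document; each statement's English description precedes it below -/
import Mathlib

section
/- Let P₁, …, P_m ⊂ ℝ^N be integral convex polytopes with d_i = dim P_i, and let n₁, …, n_m be integers with n_i ≥ d_i + 1 for all i. Then every lattice point of n₁P₁ + ⋯ + n_mP_m can be written as α' + ∑_i ∑_{j=1}^{n_i - d_i} β_j^{(i)} where α' is a lattice point of d₁P₁ + ⋯ + d_mP_m and each β_j^{(i)} ∈ P_i ∩ ℤ^N. -/
/-!
Write a point of `n • conv s` as `n • ∑ wⱼ zⱼ` with the `zⱼ ∈ s` affinely independent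
(Carathéodory), so there are at most `dim + 1` of them. If `n ≥ dim + 1`, some `n wⱼ` is at
least `1`, and subtracting `zⱼ` leaves a point of `(n - 1) • conv s`. Peeling off `n - dim`
points of `s` this way, one polytope at a time, gives the decomposition; `α'` is then a lattice
point as the difference of `α` and a sum of lattice points.
-/

open Pointwise

section
variable {𝕜 E : Type*} [Field 𝕜] [LinearOrder 𝕜] [IsStrictOrderedRing 𝕜]
  [AddCommGroup E] [Module 𝕜 E] {s : Set E}

theorem sum_smul_mem_sum_smul_convexHull {ι : Type*} (t : Finset ι) {c : ι → 𝕜} {z : ι → E}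
    (hc : ∀ i ∈ t, 0 ≤ c i) (hz : ∀ i ∈ t, z i ∈ s) (hs : s.Nonempty) :
    ∑ i ∈ t, c i • z i ∈ (∑ i ∈ t, c i) • convexHull 𝕜 s := by
  rcases (Finset.sum_nonneg hc).eq_or_lt with hzero | hpos
  · rw [← hzero, Set.zero_smul_set (hs.mono (subset_convexHull 𝕜 s))]
    refine Finset.sum_eq_zero fun i hi => ?_
    rw [(Finset.sum_eq_zero_iff_of_nonneg hc).1 hzero.symm i hi, zero_smul]
  · exact ⟨t.centerMass c z, t.centerMass_mem_convexHull hc hpos hz, smul_inv_smul₀ hpos.ne' _⟩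

theorem exists_sub_mem_smul_convexHull [FiniteDimensional 𝕜 E] {n : ℕ}
    (hn : Module.finrank 𝕜 (vectorSpan 𝕜 s) ≤ n) {x : E}
    (hx : x ∈ ((n + 1 : ℕ) : 𝕜) • convexHull 𝕜 s) :
    ∃ v ∈ s, x - v ∈ (n : 𝕜) • convexHull 𝕜 s := by
  classical
  obtain ⟨y, hy, rfl⟩ := hx
  obtain ⟨ι, _, z, w, hzs, hz, hw0, hw1, rfl⟩ := eq_pos_convex_span_of_mem_convexHull hy
  have hcard : Fintype.card ι ≤ n + 1 :=
    hz.card_le_finrank_succ.trans <| Nat.succ_le_succ <|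
      (Submodule.finrank_mono (vectorSpan_mono 𝕜 hzs)).trans hn
  -- Some weight is at least `1 / (n + 1)`, since there are at most `n + 1` of them.
  obtain ⟨i, -, hi⟩ : ∃ i ∈ Finset.univ, (1 : 𝕜) ≤ (n + 1 : ℕ) * w i := by
    refine Finset.exists_le_of_sum_le (Finset.univ_nonempty_iff.2 ?_) ?_
    · by_contra h
      simp [not_nonempty_iff.1 h] at hw1
    · rw [← Finset.mul_sum, hw1, mul_one, Finset.sum_const, nsmul_one, Finset.card_univ]
      exact_mod_cast hcard
  refine ⟨z i, hzs ⟨i, rfl⟩, ?_⟩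
  set c : ι → 𝕜 := fun j => (n + 1 : ℕ) * w j - Pi.single (M := fun _ => 𝕜) i 1 j
  have hc : ∀ j ∈ Finset.univ, 0 ≤ c j := by
    intro j _
    rcases eq_or_ne j i with rfl | hj
    · simpa [c] using hi
    · simpa [c, hj] using mul_nonneg (Nat.cast_nonneg (n + 1)) (hw0 j).le
  have hsum : ∑ j, c j = n := by
    simp [c, Finset.sum_sub_distrib, ← Finset.mul_sum, hw1]
  have hcomb : ∑ j, c j • z j = ((n + 1 : ℕ) : 𝕜) • ∑ j, w j • z j - z i := by
    simp [c, sub_smul, Finset.sum_sub_distrib, Finset.smul_sum, smul_smul]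
  rw [← hcomb, ← hsum]
  exact sum_smul_mem_sum_smul_convexHull _ hc (fun j _ => hzs ⟨j, rfl⟩) ⟨z i, hzs ⟨i, rfl⟩⟩

theorem exists_mem_smul_convexHull_add_sum [FiniteDimensional 𝕜 E] {d : ℕ}
    (hd : Module.finrank 𝕜 (vectorSpan 𝕜 s) ≤ d) (k : ℕ) {x : E}
    (hx : x ∈ ((d + k : ℕ) : 𝕜) • convexHull 𝕜 s) :
    ∃ g ∈ (d : 𝕜) • convexHull 𝕜 s, ∃ β : Fin k → E, (∀ j, β j ∈ s) ∧ x = g + ∑ j, β j := by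
  induction k generalizing x with
  | zero => exact ⟨x, hx, Fin.elim0, fun j => j.elim0, by simp⟩
  | succ k ih =>
    obtain ⟨v, hv, hxv⟩ := exists_sub_mem_smul_convexHull (hd.trans (Nat.le_add_right d k)) hx
    obtain ⟨g, hg, β, hβ, hgβ⟩ := ih hxv
    refine ⟨g, hg, Fin.cons v β, Fin.forall_fin_succ.2 ⟨hv, hβ⟩, ?_⟩
    simp only [Fin.sum_univ_succ, Fin.cons_zero, Fin.cons_succ]
    rw [← add_sub_cancel v x, hgβ]
    abel

end

def integerPoints (ι : Type*) : AddSubgroup (ι → ℝ) :=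
  AddSubgroup.pi Set.univ fun _ => (Int.castAddHom ℝ).range

theorem mem_integerPoints {ι : Type*} {x : ι → ℝ} :
    x ∈ integerPoints ι ↔ ∀ j, ∃ z : ℤ, x j = z := by
  simp only [integerPoints, AddSubgroup.mem_pi, Set.mem_univ, true_implies, AddMonoidHom.mem_range,
    Int.coe_castAddHom, eq_comm]

theorem lattice_points_of_minkowski_sum_dilations_general {N m : ℕ}
    (s : Fin m → Finset (Fin N → ℝ))
    (hsint : ∀ i, ∀ x ∈ s i, ∀ j, ∃ z : ℤ, x j = (z : ℝ))
    (P : Fin m → Set (Fin N → ℝ))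
    (hP : ∀ i, P i = convexHull ℝ ((s i : Set (Fin N → ℝ))))
    (d : Fin m → ℕ) (hd : ∀ i, d i = Module.finrank ℝ (affineSpan ℝ (P i)).direction)
    (n : Fin m → ℕ) (hn : ∀ i, d i + 1 ≤ n i) :
    ∀ α ∈ ∑ i, (n i : ℝ) • P i, (∀ j, ∃ z : ℤ, α j = (z : ℝ)) →
      ∃ (α' : Fin N → ℝ) (β : (i : Fin m) → Fin (n i - d i) → (Fin N → ℝ)),
        α' ∈ ∑ i, (d i : ℝ) • P i ∧ (∀ j, ∃ z : ℤ, α' j = (z : ℝ)) ∧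
        (∀ i k, β i k ∈ P i ∧ ∀ j, ∃ z : ℤ, β i k j = (z : ℝ)) ∧
        α = α' + ∑ i, ∑ k, β i k := by
  intro α hα hαint
  obtain ⟨f, hf, rfl⟩ := (Set.mem_finsetSum _ _ _).1 hα
  have hdecomp (i : Fin m) : ∃ g ∈ (d i : ℝ) • P i, ∃ β : Fin (n i - d i) → Fin N → ℝ,
      (∀ k, β k ∈ s i) ∧ f i = g + ∑ k, β k := by
    have hfi := hf (Finset.mem_univ i)
    rw [hP i, ← Nat.add_sub_cancel' (Nat.le_of_succ_le (hn i))] at hfi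
    rw [hP i]
    refine exists_mem_smul_convexHull_add_sum ?_ _ hfi
    rw [hd i, hP i, affineSpan_convexHull, direction_affineSpan]
  choose g hg β hβs hf_eq using hdecomp
  have hβ (i : Fin m) (k : Fin (n i - d i)) : β i k ∈ integerPoints (Fin N) :=
    mem_integerPoints.2 (hsint i _ (hβs i k))
  have hsum : ∑ i, f i = ∑ i, g i + ∑ i, ∑ k, β i k := by
    rw [← Finset.sum_add_distrib]; exact Finset.sum_congr rfl fun i _ => hf_eq i
  refine ⟨∑ i, g i, β, Set.finsetSum_mem_finsetSum _ _ _ fun i _ => hg i, ?_,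
    fun i k => ⟨hP i ▸ subset_convexHull ℝ _ (hβs i k), mem_integerPoints.1 (hβ i k)⟩, hsum⟩
  rw [← mem_integerPoints, eq_sub_of_add_eq hsum.symm]
  exact sub_mem (mem_integerPoints.2 hαint) (sum_mem fun i _ => sum_mem fun k _ => hβ i k)

/-- Lemma 2.5 (a): if `nᵢ ≥ dᵢ + 1` for all `i`, then every lattice point of
`n₁P₁ + ⋯ + n_mP_m` decomposes as a lattice point of `d₁P₁ + ⋯ + d_mP_m` plus, for each
`i`, a sum of `nᵢ - dᵢ` lattice points of `Pᵢ`. -/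
theorem lattice_points_of_minkowski_sum_dilations {N m : ℕ}
    (s : Fin m → Finset (Fin N → ℝ)) (hs : ∀ i, (s i).Nonempty)
    (hsint : ∀ i, ∀ x ∈ s i, ∀ j, ∃ z : ℤ, x j = (z : ℝ))
    (P : Fin m → Set (Fin N → ℝ))
    (hP : ∀ i, P i = convexHull ℝ ((s i : Set (Fin N → ℝ))))
    (d : Fin m → ℕ) (hd : ∀ i, d i = Module.finrank ℝ (affineSpan ℝ (P i)).direction)
    (n : Fin m → ℕ) (hn : ∀ i, d i + 1 ≤ n i) :
    ∀ α ∈ ∑ i, (n i : ℝ) • P i, (∀ j, ∃ z : ℤ, α j = (z : ℝ)) →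
      ∃ (α' : Fin N → ℝ) (β : (i : Fin m) → Fin (n i - d i) → (Fin N → ℝ)),
        α' ∈ ∑ i, (d i : ℝ) • P i ∧ (∀ j, ∃ z : ℤ, α' j = (z : ℝ)) ∧
        (∀ i k, β i k ∈ P i ∧ ∀ j, ∃ z : ℤ, β i k j = (z : ℝ)) ∧
        α = α' + ∑ i, ∑ k, β i k :=
  lattice_points_of_minkowski_sum_dilations_general s hsint P hP d hd n hn
end

section
/- Let P₁, …, P_m ⊂ ℝ^N be integral convex polytopes with d_i = dim P_i, and let n₁, …, n_m be integers with n_i ≥ d_i + 2 for all i. Then every lattice point in the relative interior of n₁P₁ + ⋯ + n_mP_m can be written as α' + ∑_i ∑_{j=1}^{n_i - d_i - 1} β_j^{(i)}, where α' is a lattice point in the relative interior of (d₁+1)P₁ + ⋯ + (d_m+1)P_m and each β_j^{(i)} ∈ P_i ∩ ℤ^N. -/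
/-!
Relative interiors of nonempty convex sets commute with Minkowski sums and dilations, so a
point of `relint (∑ nᵢ • Pᵢ)` is a sum of points `nᵢ • qᵢ` with `qᵢ ∈ relint Pᵢ`. By
Carathéodory, `qᵢ` is a positive convex combination of at most `dᵢ + 1` affinely independent
points of `sᵢ`, so one of them, `v`, carries weight at least `1 / (dᵢ + 1) ≥ 1 / (nᵢ - 1)`.
Then `nᵢ • qᵢ - v = (nᵢ - 1) • q'` where `q'` is again a positive combination of the same points,
and a positive combination of points of a convex set lies in its relative interior as soon as
some convex combination of the same points does.
Peeling off points of `sᵢ` in this way until `nᵢ = dᵢ + 1` leaves `α'`; integrality is inherited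
from `α` and the `sᵢ`.
-/

open Pointwise Set Filter Topology

theorem exists_pos_of_eventually_nhds_zero {p : ℝ → Prop} (h : ∀ᶠ δ in 𝓝 0, p δ) :
    ∃ δ > 0, p δ :=
  (((h.filter_mono nhdsWithin_le_nhds).and self_mem_nhdsWithin).exists (f := 𝓝[>] 0)).imp
    fun _ h => ⟨h.2, h.1⟩

section IntrinsicInterior

variable {E : Type*} [NormedAddCommGroup E] [NormedSpace ℝ E] {C : Set E} {x y : E}

theorem mem_intrinsicInterior_iff_dist :
    x ∈ intrinsicInterior ℝ C ↔ x ∈ affineSpan ℝ C ∧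
      ∃ ε > 0, ∀ y ∈ affineSpan ℝ C, dist y x < ε → y ∈ C := by
  constructor
  · rintro ⟨⟨x, hx⟩, hint, rfl⟩
    obtain ⟨ε, hε, hball⟩ := Metric.mem_nhds_iff.1 (mem_interior_iff_mem_nhds.1 hint)
    exact ⟨hx, ε, hε, fun y hy hdy => hball (show (⟨y, hy⟩ : affineSpan ℝ C) ∈ _ from hdy)⟩
  · rintro ⟨hx, ε, hε, h⟩
    refine ⟨⟨x, hx⟩, mem_interior_iff_mem_nhds.2 (Metric.mem_nhds_iff.2 ⟨ε, hε, ?_⟩), rfl⟩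
    exact fun y hy => h y y.2 hy

theorem Convex.combo_intrinsicInterior_self_mem_intrinsicInterior (hC : Convex ℝ C)
    (hx : x ∈ intrinsicInterior ℝ C) (hy : y ∈ C) {a b : ℝ} (ha : 0 < a) (hb : 0 ≤ b)
    (hab : a + b = 1) : a • x + b • y ∈ intrinsicInterior ℝ C := by
  rw [mem_intrinsicInterior_iff_dist] at hx ⊢
  obtain ⟨hxA, ε, hε, hball⟩ := hx
  obtain rfl : b = 1 - a := by linarith
  have hyA : y ∈ affineSpan ℝ C := subset_affineSpan ℝ C hy
  have hzA : a • x + (1 - a) • y ∈ affineSpan ℝ C := by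
    convert (affineSpan ℝ C).smul_vsub_vadd_mem a hxA hyA hyA using 1
    simp only [vsub_eq_sub, vadd_eq_add]; module
  refine ⟨hzA, a * ε, by positivity, fun w hwA hw => ?_⟩
  -- `w` is the image of a point `x'` near `x` under the homothety of ratio `a` about `y`
  set x' := a⁻¹ • (w - (a • x + (1 - a) • y)) + x
  have hx'A : x' ∈ affineSpan ℝ C := (affineSpan ℝ C).smul_vsub_vadd_mem a⁻¹ hwA hzA hxA
  have hx' : x' ∈ C := by
    refine hball x' hx'A ?_
    rwa [dist_eq_norm, add_sub_cancel_right, norm_smul, norm_inv, Real.norm_of_nonneg ha.le,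
      ← dist_eq_norm, inv_mul_lt_iff₀ ha]
  have hw' : w = a • x' + (1 - a) • y := by
    simp only [x', smul_add, smul_smul, mul_inv_cancel₀ ha.ne', one_smul]; abel
  exact hw' ▸ hC hx' hy ha.le hb (by ring)

theorem eventually_add_smul_sub_mem_of_mem_intrinsicInterior (hx : x ∈ intrinsicInterior ℝ C)
    (hy : y ∈ C) : ∀ᶠ δ in 𝓝 (0 : ℝ), x + δ • (x - y) ∈ C := by
  obtain ⟨hxA, ε, hε, hball⟩ := mem_intrinsicInterior_iff_dist.1 hx
  have hcont : Filter.Tendsto (fun δ : ℝ => x + δ • (x - y)) (𝓝 0) (𝓝 x) :=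
    (by fun_prop : Continuous fun δ : ℝ => x + δ • (x - y)).tendsto' 0 x (by simp)
  filter_upwards [hcont (Metric.ball_mem_nhds x hε)] with δ hδ
  refine hball _ ?_ hδ
  simpa only [vsub_eq_sub, vadd_eq_add, add_comm] using
    (affineSpan ℝ C).smul_vsub_vadd_mem δ hxA (subset_affineSpan ℝ C hy) hxA

theorem Convex.mem_intrinsicInterior_of_add_smul_sub_mem (hC : Convex ℝ C) {z : E}
    (hz : z ∈ intrinsicInterior ℝ C) {δ : ℝ} (hδ : 0 < δ) (hx : x + δ • (x - z) ∈ C) :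
    x ∈ intrinsicInterior ℝ C := by
  have h := hC.combo_intrinsicInterior_self_mem_intrinsicInterior hz hx
    (a := δ / (1 + δ)) (b := 1 / (1 + δ)) (by positivity) (by positivity) (by field_simp; ring)
  convert h using 1
  match_scalars
  field_simp
  ring

theorem Convex.mem_intrinsicInterior_of_forall_exists [FiniteDimensional ℝ E] (hC : Convex ℝ C)
    (hx : x ∈ C) (h : ∀ y ∈ C, ∃ δ > (0 : ℝ), x + δ • (x - y) ∈ C) :
    x ∈ intrinsicInterior ℝ C := by
  obtain ⟨z, hz⟩ := Set.Nonempty.intrinsicInterior hC ⟨x, hx⟩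
  obtain ⟨δ, hδ, hxz⟩ := h z (intrinsicInterior_subset hz)
  exact hC.mem_intrinsicInterior_of_add_smul_sub_mem hz hδ hxz

theorem intrinsicInterior_smul [FiniteDimensional ℝ E] {c : ℝ} (hc : c ≠ 0) (C : Set E) :
    intrinsicInterior ℝ (c • C) = c • intrinsicInterior ℝ C :=
  (LinearEquiv.smulOfNeZero ℝ E c hc).toAffineEquiv.intrinsicInterior_image C

theorem intrinsicInterior_add [FiniteDimensional ℝ E] {A B : Set E} (hA : Convex ℝ A)
    (hB : Convex ℝ B) (hAne : A.Nonempty) (hBne : B.Nonempty) :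
    intrinsicInterior ℝ (A + B) = intrinsicInterior ℝ A + intrinsicInterior ℝ B := by
  apply Subset.antisymm
  · intro w hw
    obtain ⟨a₀, ha₀⟩ := hAne.intrinsicInterior hA
    obtain ⟨b₀, hb₀⟩ := hBne.intrinsicInterior hB
    obtain ⟨δ, hδ, a₁, ha₁, b₁, hb₁, hab⟩ := exists_pos_of_eventually_nhds_zero
      (eventually_add_smul_sub_mem_of_mem_intrinsicInterior hw
        (add_mem_add (intrinsicInterior_subset ha₀) (intrinsicInterior_subset hb₀)))
    have hδ₀ : 0 < δ / (1 + δ) := by positivity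
    have hδ₁ : 0 ≤ 1 / (1 + δ) := by positivity
    have hδ₂ : δ / (1 + δ) + 1 / (1 + δ) = 1 := by field_simp; ring
    refine ⟨(δ / (1 + δ)) • a₀ + (1 / (1 + δ)) • a₁,
      hA.combo_intrinsicInterior_self_mem_intrinsicInterior ha₀ ha₁ hδ₀ hδ₁ hδ₂,
      (δ / (1 + δ)) • b₀ + (1 / (1 + δ)) • b₁,
      hB.combo_intrinsicInterior_self_mem_intrinsicInterior hb₀ hb₁ hδ₀ hδ₁ hδ₂, ?_⟩
    · have hw : w = (δ / (1 + δ)) • (a₀ + b₀) + (1 / (1 + δ)) • (a₁ + b₁) := by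
        rw [show a₁ + b₁ = _ from hab]; match_scalars <;> field_simp <;> ring
      rw [hw]; module
  · rintro _ ⟨a, ha, b, hb, rfl⟩
    refine (hA.add hB).mem_intrinsicInterior_of_forall_exists
      (add_mem_add (intrinsicInterior_subset ha) (intrinsicInterior_subset hb)) ?_
    rintro _ ⟨y, hy, z, hz, rfl⟩
    obtain ⟨δ, hδ, hay, hbz⟩ := exists_pos_of_eventually_nhds_zero
      ((eventually_add_smul_sub_mem_of_mem_intrinsicInterior ha hy).and
        (eventually_add_smul_sub_mem_of_mem_intrinsicInterior hb hz))
    refine ⟨δ, hδ, ?_⟩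
    convert add_mem_add hay hbz using 1
    module

theorem intrinsicInterior_finsetSum [FiniteDimensional ℝ E] {ι : Type*} (t : Finset ι)
    {A : ι → Set E} (hA : ∀ i ∈ t, Convex ℝ (A i)) (hAne : ∀ i ∈ t, (A i).Nonempty) :
    intrinsicInterior ℝ (∑ i ∈ t, A i) = ∑ i ∈ t, intrinsicInterior ℝ (A i) := by
  classical
  induction t using Finset.induction_on with
  | empty =>
    rw [Finset.sum_empty, Finset.sum_empty, ← singleton_zero, intrinsicInterior_singleton]
  | insert j t hj ih =>
    simp only [Finset.forall_mem_insert] at hA hAne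
    choose! a ha using hAne.2
    have hne : (∑ i ∈ t, A i).Nonempty := ⟨_, finsetSum_mem_finsetSum t A a ha⟩
    rw [Finset.sum_insert hj, Finset.sum_insert hj,
      intrinsicInterior_add hA.1 (convex_sum A hA.2) hAne.1 hne, ih hA.2 hAne.2]

theorem Convex.sum_smul_mem_intrinsicInterior_of_pos {ι : Type*} [Fintype ι] (hC : Convex ℝ C)
    {z : ι → E} (hz : ∀ i, z i ∈ C) {w v : ι → ℝ} (hv : ∀ i, 0 < v i)
    (hv₁ : ∑ i, v i = 1) (hw₁ : ∑ i, w i = 1)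
    (hwz : ∑ i, w i • z i ∈ intrinsicInterior ℝ C) :
    ∑ i, v i • z i ∈ intrinsicInterior ℝ C := by
  have hsmall : ∀ i, ∀ᶠ ε in 𝓝 (0 : ℝ), ε * w i < v i := fun i =>
    (continuous_id.mul continuous_const).continuousAt.eventually_lt continuousAt_const
      (by simpa using hv i)
  obtain ⟨ε, hε, hεv⟩ := exists_pos_of_eventually_nhds_zero (eventually_all.2 hsmall)
  refine hC.mem_intrinsicInterior_of_add_smul_sub_mem hwz hε ?_
  have hr : ∑ i, v i • z i + ε • (∑ i, v i • z i - ∑ i, w i • z i)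
      = ∑ i, ((1 + ε) * v i - ε * w i) • z i := by
    simp only [Finset.smul_sum, ← Finset.sum_sub_distrib, ← Finset.sum_add_distrib]
    exact Finset.sum_congr rfl fun i _ => by module
  rw [hr]
  refine hC.sum_mem (fun i _ => ?_) ?_ fun i _ => hz i
  · nlinarith [hεv i, hv i]
  · simp only [Finset.sum_sub_distrib, ← Finset.mul_sum, hv₁, hw₁]; ring

theorem exists_add_smul_sub_mem_intrinsicInterior_convexHull [FiniteDimensional ℝ E] {s : Set E}
    {d : ℕ} (hdim : Module.finrank ℝ (affineSpan ℝ (convexHull ℝ s)).direction ≤ d) {p : E}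
    (hp : p ∈ intrinsicInterior ℝ (convexHull ℝ s)) {t : ℝ} (ht₀ : 0 ≤ t)
    (ht : t ≤ ((d : ℝ) + 1)⁻¹) :
    ∃ v ∈ s, p + t • (p - v) ∈ intrinsicInterior ℝ (convexHull ℝ s) := by
  classical
  obtain ⟨ι, _, z, w, hzs, hz, hw, hw₁, rfl⟩ :=
    eq_pos_convex_span_of_mem_convexHull (intrinsicInterior_subset hp)
  have hcard : (Fintype.card ι : ℝ) ≤ d + 1 := by
    have hspan : vectorSpan ℝ (range z) ≤ (affineSpan ℝ (convexHull ℝ s)).direction := by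
      rw [direction_affineSpan]; exact vectorSpan_mono ℝ (hzs.trans (subset_convexHull ℝ s))
    exact_mod_cast hz.card_le_finrank_succ.trans (by grw [Submodule.finrank_mono hspan, hdim])
  have hι : (Finset.univ : Finset ι).Nonempty :=
    Finset.nonempty_of_sum_ne_zero (f := w) (by simp [hw₁])
  have hcard₀ : (Fintype.card ι : ℝ) ≠ 0 := by simpa using hι.card_pos.ne'
  obtain ⟨j, -, hj⟩ := Finset.exists_le_of_sum_le (f := fun _ => (Fintype.card ι : ℝ)⁻¹) (g := w)
    hι (by simp [hw₁, hcard₀])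
  have htj : t ≤ w j := calc
    t ≤ ((d : ℝ) + 1)⁻¹ := ht
    _ ≤ (Fintype.card ι : ℝ)⁻¹ := inv_anti₀ (by positivity) hcard
    _ ≤ w j := hj
  have hwj : w j ≤ 1 := hw₁ ▸ Finset.single_le_sum (fun i _ => (hw i).le) (Finset.mem_univ j)
  set v : ι → ℝ := fun i => (1 + t) * w i - if i = j then t else 0
  have hv : ∀ i, 0 < v i := by
    intro i
    by_cases hij : i = j
    -- `(1 + t) * w j - t ≥ w j ^ 2` since `t ≤ w j ≤ 1`
    · subst hij; simp only [v, if_pos]; nlinarith [hw i]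
    · simp only [v, if_neg hij]; nlinarith [hw i]
  have hv₁ : ∑ i, v i = 1 := by
    simp [v, Finset.sum_sub_distrib, ← Finset.mul_sum, hw₁]
  have hpv : ∑ i, w i • z i + t • (∑ i, w i • z i - z j) = ∑ i, v i • z i := by
    simp only [v, sub_smul, ← smul_smul, ite_smul, zero_smul, Finset.sum_sub_distrib,
      ← Finset.smul_sum, Finset.sum_ite_eq', Finset.mem_univ, ↓reduceIte]
    module
  refine ⟨z j, hzs ⟨j, rfl⟩, hpv ▸ (convex_convexHull ℝ s).sum_smul_mem_intrinsicInterior_of_pos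
    (fun i => subset_convexHull ℝ s (hzs ⟨i, rfl⟩)) hv hv₁ hw₁ hp⟩

theorem exists_sub_mem_intrinsicInterior_smul_convexHull [FiniteDimensional ℝ E] {s : Set E}
    {d : ℕ} (hdim : Module.finrank ℝ (affineSpan ℝ (convexHull ℝ s)).direction ≤ d) {c : ℝ}
    (hc : d + 2 ≤ c) {q : E} (hq : q ∈ intrinsicInterior ℝ (c • convexHull ℝ s)) :
    ∃ v ∈ s, q - v ∈ intrinsicInterior ℝ ((c - 1) • convexHull ℝ s) := by
  have hc₁ : 0 < c - 1 := by linarith [(d.cast_nonneg : (0 : ℝ) ≤ d)]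
  rw [intrinsicInterior_smul (by linarith)] at hq
  obtain ⟨p, hp, rfl⟩ := hq
  obtain ⟨v, hv, hpv⟩ := exists_add_smul_sub_mem_intrinsicInterior_convexHull hdim hp
    (t := (c - 1)⁻¹) (inv_nonneg.2 hc₁.le) (inv_anti₀ (by positivity) (by linarith))
  refine ⟨v, hv, ?_⟩
  rw [intrinsicInterior_smul hc₁.ne']
  convert smul_mem_smul_set (a := c - 1) hpv using 1
  rw [smul_add, smul_smul, mul_inv_cancel₀ hc₁.ne']
  module

theorem exists_sub_sum_mem_intrinsicInterior_smul_convexHull [FiniteDimensional ℝ E] {s : Set E}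
    {d : ℕ} (hdim : Module.finrank ℝ (affineSpan ℝ (convexHull ℝ s)).direction ≤ d) (k : ℕ)
    {q : E} (hq : q ∈ intrinsicInterior ℝ (((d : ℝ) + 1 + k) • convexHull ℝ s)) :
    ∃ β : Fin k → E, (∀ i, β i ∈ s) ∧
      q - ∑ i, β i ∈ intrinsicInterior ℝ (((d : ℝ) + 1) • convexHull ℝ s) := by
  induction k generalizing q with
  | zero => exact ⟨Fin.elim0, fun i => i.elim0, by simpa using hq⟩
  | succ k ih =>
    obtain ⟨v, hv, hqv⟩ := exists_sub_mem_intrinsicInterior_smul_convexHull hdim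
      (by push_cast; linarith [(k.cast_nonneg : (0 : ℝ) ≤ k)]) hq
    obtain ⟨β, hβ, hqβ⟩ := ih (q := q - v) (by convert hqv using 3; push_cast; ring)
    refine ⟨Fin.cons v β, Fin.cases hv hβ, ?_⟩
    rwa [Fin.sum_univ_succ, Fin.cons_zero, sub_add_eq_sub_sub]

end IntrinsicInterior

theorem mem_span_int_basisFun_iff {ι : Type*} [Finite ι] {x : ι → ℝ} :
    x ∈ Submodule.span ℤ (range (Pi.basisFun ℝ ι)) ↔ ∀ j, ∃ z : ℤ, x j = z := by
  simp [Module.Basis.mem_span_iff_repr_mem, eq_comm]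

/-- Lemma 2.5 (b): if `nᵢ ≥ dᵢ + 2` for all `i`, then every lattice point in the relative
interior of `n₁P₁ + ⋯ + n_mP_m` decomposes as a lattice point of the relative interior of
`(d₁+1)P₁ + ⋯ + (d_m+1)P_m` plus, for each `i`, a sum of `nᵢ - dᵢ - 1` lattice points of `Pᵢ`. -/
theorem interior_lattice_points_of_minkowski_sum_dilations {N m : ℕ}
    (s : Fin m → Finset (Fin N → ℝ)) (hs : ∀ i, (s i).Nonempty)
    (hsint : ∀ i, ∀ x ∈ s i, ∀ j, ∃ z : ℤ, x j = (z : ℝ))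
    (P : Fin m → Set (Fin N → ℝ))
    (hP : ∀ i, P i = convexHull ℝ ((s i : Set (Fin N → ℝ))))
    (d : Fin m → ℕ) (hd : ∀ i, d i = Module.finrank ℝ (affineSpan ℝ (P i)).direction)
    (n : Fin m → ℕ) (hn : ∀ i, d i + 2 ≤ n i) :
    ∀ α ∈ intrinsicInterior ℝ (∑ i, (n i : ℝ) • P i), (∀ j, ∃ z : ℤ, α j = (z : ℝ)) →
      ∃ (α' : Fin N → ℝ) (β : (i : Fin m) → Fin (n i - d i - 1) → (Fin N → ℝ)),
        α' ∈ intrinsicInterior ℝ (∑ i, ((d i : ℝ) + 1) • P i) ∧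
        (∀ j, ∃ z : ℤ, α' j = (z : ℝ)) ∧
        (∀ i k, β i k ∈ P i ∧ ∀ j, ∃ z : ℤ, β i k j = (z : ℝ)) ∧
        α = α' + ∑ i, ∑ k, β i k := by
  intro α hα hαZ
  have hsum (c : Fin m → ℝ) :
      intrinsicInterior ℝ (∑ i, c i • P i) = ∑ i, intrinsicInterior ℝ (c i • P i) :=
    intrinsicInterior_finsetSum _ (fun i _ => hP i ▸ (convex_convexHull ℝ _).smul _)
      fun i _ => hP i ▸ (hs i).to_set.convexHull.smul_set
  obtain ⟨b, hb, rfl⟩ := (mem_fintype_sum _ _).1 (hsum _ ▸ hα)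
  have hpeel (i) : ∃ β : Fin (n i - d i - 1) → (Fin N → ℝ), (∀ k, β k ∈ s i) ∧
      b i - ∑ k, β k ∈ intrinsicInterior ℝ (((d i : ℝ) + 1) • P i) := by
    have hni : (n i : ℝ) = d i + 1 + (n i - d i - 1 : ℕ) := by
      have := hn i
      exact_mod_cast (by omega : n i = d i + 1 + (n i - d i - 1))
    have hbi := hb i
    rw [hni, hP i] at hbi
    rw [hP i]
    exact exists_sub_sum_mem_intrinsicInterior_smul_convexHull (hP i ▸ hd i).ge _ hbi
  choose β hβs hβ using hpeel
  let L := Submodule.span ℤ (range (Pi.basisFun ℝ (Fin N)))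
  have hβL (i k) : β i k ∈ L := mem_span_int_basisFun_iff.2 (hsint i _ (hβs i k))
  refine ⟨∑ i, b i - ∑ i, ∑ k, β i k, β, ?_, ?_,
    fun i k => ⟨hP i ▸ subset_convexHull ℝ _ (hβs i k), hsint i _ (hβs i k)⟩, by abel⟩
  · rw [hsum, mem_fintype_sum]
    exact ⟨_, hβ, Finset.sum_sub_distrib ..⟩
  · exact mem_span_int_basisFun_iff.1 (L.sub_mem (mem_span_int_basisFun_iff.2 hαZ)
      (L.sum_mem fun i _ => L.sum_mem fun k _ => hβL i k))
end

section
/- Let P₁, …, P_m ⊂ ℝ^N be integral convex polytopes with d_i = dim P_i, and let n₁, …, n_m be positive integers with n_i ≥ d_i for all i. Then the Minkowski sum Q = n₁P₁ + ⋯ + n_mP_m has the integer decomposition property: for every positive integer k and every α ∈ kQ ∩ ℤ^N, there exist α₁, …, α_k ∈ Q ∩ ℤ^N with α = α₁ + ⋯ + α_k. -/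
/-!
By Carathéodory, a point `y` of a polytope `conv S` of dimension at most `u` is a convex
combination of at most `u + 1` points of `S`, so one of the weights of `(u + 1) • y` is at least
`1`: peeling off that vertex leaves `(u + 1) • y = v + u • y'` with `v ∈ S`, `y' ∈ conv S`.
Iterating, `(c + r) • conv S ⊆ (sums of r points of S) + c • conv S` as long as `c ≥ max(u, 1)`.
For `Q = ∑ nᵢ • conv Sᵢ` and `k ≥ 2`, applying this to every summand with `c = (k - 1) nᵢ`,
`r = nᵢ` writes a point of `k • Q` as a lattice point of `Q` plus a point of `(k - 1) • Q`, and
induction on `k` gives the integer decomposition property.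
-/

open Pointwise

section IDP

variable (𝕜 : Type*) {E : Type*} [Semiring 𝕜] [AddCommGroup E] [Module 𝕜 E]

def HasIDP (Q : Set E) (L : AddSubgroup E) : Prop :=
  ∀ k : ℕ, 0 < k → ∀ α ∈ (k : 𝕜) • Q, α ∈ L →
    ∃ f : Fin k → E, (∀ t, f t ∈ Q ∧ f t ∈ L) ∧ α = ∑ t, f t

variable {𝕜}

theorem HasIDP.of_exists_sub_mem_smul {Q : Set E} {L : AddSubgroup E}
    (h : ∀ K : ℕ, 0 < K → ∀ β ∈ ((K + 1 : ℕ) : 𝕜) • Q, β ∈ L →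
      ∃ γ ∈ Q, γ ∈ L ∧ β - γ ∈ (K : 𝕜) • Q) :
    HasIDP 𝕜 Q L := by
  intro k hk
  obtain ⟨K, rfl⟩ : ∃ K, k = K + 1 := ⟨k - 1, by omega⟩
  induction K with
  | zero =>
    intro α hαQ hαL
    rw [Nat.cast_one, one_smul] at hαQ
    exact ⟨fun _ ↦ α, fun _ ↦ ⟨hαQ, hαL⟩, by simp⟩
  | succ K ih =>
    intro α hαQ hαL
    obtain ⟨γ, hγQ, hγL, hrest⟩ := h (K + 1) K.succ_pos α hαQ hαL
    obtain ⟨f, hf, hsum⟩ := ih K.succ_pos (α - γ) hrest (sub_mem hαL hγL)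
    refine ⟨Fin.cons γ f, Fin.cases ⟨hγQ, hγL⟩ hf, ?_⟩
    rw [Fin.sum_cons, ← hsum, add_sub_cancel]

end IDP

section Peeling

variable {𝕜 E : Type*} [Field 𝕜] [LinearOrder 𝕜] [IsStrictOrderedRing 𝕜]
  [AddCommGroup E] [Module 𝕜 E]

theorem Finset.exists_mem_succ_smul_eq_add_smul {S : Finset E} {u : ℕ}
    (hS : Module.finrank 𝕜 (vectorSpan 𝕜 (S : Set E)) ≤ u) (hu : 0 < u)
    {y : E} (hy : y ∈ convexHull 𝕜 (S : Set E)) :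
    ∃ v ∈ S, ∃ y' ∈ convexHull 𝕜 (S : Set E), ((u + 1 : ℕ) : 𝕜) • y = v + (u : 𝕜) • y' := by
  classical
  obtain ⟨ι, _, z, w, hzS, hz, hw0, hw1, rfl⟩ := eq_pos_convex_span_of_mem_convexHull hy
  have := finiteDimensional_vectorSpan_of_finite 𝕜 S.finite_toSet
  have hcard : Fintype.card ι ≤ u + 1 :=
    hz.card_le_finrank_succ.trans <| Nat.succ_le_succ <|
      (Submodule.finrank_mono (vectorSpan_mono 𝕜 hzS)).trans hS
  have : Nonempty ι := by
    by_contra h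
    simp [not_nonempty_iff.mp h] at hw1
  obtain ⟨i₀, -, hi₀⟩ : ∃ i₀ ∈ Finset.univ, (1 : 𝕜) ≤ (u + 1 : ℕ) * w i₀ := by
    refine Finset.exists_le_of_sum_le Finset.univ_nonempty ?_
    rw [← Finset.mul_sum, hw1, mul_one, Finset.sum_const, nsmul_one, Finset.card_univ]
    exact_mod_cast hcard
  set l : ι → 𝕜 := fun i ↦ (u + 1 : ℕ) * w i - if i = i₀ then 1 else 0
  have hl0 : ∀ i ∈ Finset.univ, 0 ≤ l i := by
    intro i _
    by_cases h : i = i₀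
    · simpa [l, h] using hi₀
    · simpa [l, h] using mul_nonneg (by positivity) (hw0 i).le
  have hl1 : ∑ i, l i = u := by
    simp [l, Finset.sum_sub_distrib, ← Finset.mul_sum, hw1]
  refine ⟨z i₀, hzS (Set.mem_range_self i₀), Finset.univ.centerMass l z,
    Finset.univ.centerMass_mem_convexHull hl0 (by rw [hl1]; exact_mod_cast hu)
      fun i _ ↦ hzS (Set.mem_range_self i), ?_⟩
  rw [Finset.centerMass, hl1, smul_inv_smul₀ (by exact_mod_cast hu.ne')]
  simp [l, sub_smul, Finset.sum_sub_distrib, mul_smul, Finset.smul_sum]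

theorem Finset.exists_mem_closure_smul_eq_add_smul {S : Finset E} {c : ℕ}
    (hS : Module.finrank 𝕜 (vectorSpan 𝕜 (S : Set E)) ≤ c) (hc : 0 < c) (r : ℕ)
    {y : E} (hy : y ∈ convexHull 𝕜 (S : Set E)) :
    ∃ p ∈ AddSubmonoid.closure (S : Set E), p ∈ (r : 𝕜) • convexHull 𝕜 (S : Set E) ∧
      ∃ y' ∈ convexHull 𝕜 (S : Set E), ((c + r : ℕ) : 𝕜) • y = p + (c : 𝕜) • y' := by
  induction r generalizing y with
  | zero =>
    refine ⟨0, zero_mem _, ?_, y, hy, by simp⟩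
    rw [Nat.cast_zero, Set.zero_smul_set ⟨y, hy⟩]
    rfl
  | succ r ih =>
    obtain ⟨v, hv, y₁, hy₁, hy⟩ :=
      S.exists_mem_succ_smul_eq_add_smul (u := c + r) (hS.trans le_self_add) (by omega) hy
    obtain ⟨p, hpS, hpP, y', hy', hy₁⟩ := ih hy₁
    refine ⟨v + p, add_mem (AddSubmonoid.subset_closure hv) hpS, ?_, y', hy', ?_⟩
    · rw [Nat.cast_succ, add_comm, (convex_convexHull 𝕜 _).add_smul zero_le_one r.cast_nonneg,
        one_smul]
      exact Set.add_mem_add (subset_convexHull 𝕜 _ hv) hpP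
    · rw [← add_assoc, hy, hy₁, add_assoc]

theorem exists_mem_closure_sub_mem_smul_sum_smul_convexHull {ι : Type*} [Fintype ι]
    {S : ι → Finset E} {n : ι → ℕ}
    (hS : ∀ i, Module.finrank 𝕜 (vectorSpan 𝕜 (S i : Set E)) ≤ n i) (hn : ∀ i, 0 < n i)
    {K : ℕ} (hK : 0 < K) {β : E}
    (hβ : β ∈ ((K + 1 : ℕ) : 𝕜) • ∑ i, (n i : 𝕜) • convexHull 𝕜 (S i : Set E)) :
    ∃ γ ∈ ∑ i, (n i : 𝕜) • convexHull 𝕜 (S i : Set E),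
      γ ∈ AddSubmonoid.closure (⋃ i, (S i : Set E)) ∧
      β - γ ∈ (K : 𝕜) • ∑ i, (n i : 𝕜) • convexHull 𝕜 (S i : Set E) := by
  obtain ⟨_, hq, rfl⟩ := hβ
  obtain ⟨g, hg, rfl⟩ := (Set.mem_fintype_sum _ _).mp hq
  choose y hy hyg using fun i ↦ Set.mem_smul_set.mp (hg i)
  choose p hpS hpP y' hy' hpy using fun i ↦
    (S i).exists_mem_closure_smul_eq_add_smul (𝕜 := 𝕜)
      ((hS i).trans (Nat.le_mul_of_pos_left _ hK)) (Nat.mul_pos hK (hn i)) (n i) (hy i)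
  have hsplit : ∀ i, ((K + 1 : ℕ) : 𝕜) • g i = p i + (K : 𝕜) • (n i : 𝕜) • y' i := by
    intro i
    rw [← hyg i, smul_smul, smul_smul, ← Nat.cast_mul, ← Nat.cast_mul, add_one_mul, hpy i]
  have hrest : ((K + 1 : ℕ) : 𝕜) • ∑ i, g i - ∑ i, p i = (K : 𝕜) • ∑ i, (n i : 𝕜) • y' i := by
    simp only [Finset.smul_sum, hsplit, Finset.sum_add_distrib, add_sub_cancel_left]
  refine ⟨∑ i, p i, Set.finsetSum_mem_finsetSum _ _ _ fun i _ ↦ hpP i,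
    sum_mem fun i _ ↦ AddSubmonoid.closure_mono (Set.subset_iUnion (fun i ↦ (S i : Set E)) i)
      (hpS i), hrest ▸ Set.smul_mem_smul_set ?_⟩
  exact Set.finsetSum_mem_finsetSum _ _ _ fun i _ ↦ Set.smul_mem_smul_set (hy' i)

theorem hasIDP_sum_smul_convexHull {ι : Type*} [Fintype ι] {S : ι → Finset E} {n : ι → ℕ}
    (hS : ∀ i, Module.finrank 𝕜 (vectorSpan 𝕜 (S i : Set E)) ≤ n i) (hn : ∀ i, 0 < n i)
    {L : AddSubgroup E} (hSL : ∀ i, (S i : Set E) ⊆ L) :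
    HasIDP 𝕜 (∑ i, (n i : 𝕜) • convexHull 𝕜 (S i : Set E)) L :=
  HasIDP.of_exists_sub_mem_smul fun _ hK _ hβ _ ↦
    have ⟨γ, hγQ, hγS, hrest⟩ := exists_mem_closure_sub_mem_smul_sum_smul_convexHull hS hn hK hβ
    ⟨γ, hγQ, AddSubmonoid.closure_le.mpr (Set.iUnion_subset hSL) hγS, hrest⟩

end Peeling

def intLattice (ι : Type*) : AddSubgroup (ι → ℝ) where
  carrier := {x | ∀ j, ∃ z : ℤ, x j = z}
  add_mem' {x y} hx hy j := by
    obtain ⟨a, ha⟩ := hx j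
    obtain ⟨b, hb⟩ := hy j
    exact ⟨a + b, by simp [ha, hb]⟩
  zero_mem' j := ⟨0, by simp⟩
  neg_mem' {x} hx j := by
    obtain ⟨a, ha⟩ := hx j
    exact ⟨-a, by simp [ha]⟩

theorem minkowski_sum_idp_general {N m : ℕ}
    (s : Fin m → Finset (Fin N → ℝ))
    (hsint : ∀ i, ∀ x ∈ s i, ∀ j, ∃ z : ℤ, x j = (z : ℝ))
    (P : Fin m → Set (Fin N → ℝ))
    (hP : ∀ i, P i = convexHull ℝ ((s i : Set (Fin N → ℝ))))
    (d : Fin m → ℕ) (hd : ∀ i, d i = Module.finrank ℝ (affineSpan ℝ (P i)).direction)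
    (n : Fin m → ℕ) (hnpos : ∀ i, 0 < n i) (hn : ∀ i, d i ≤ n i)
    (Q : Set (Fin N → ℝ)) (hQ : Q = ∑ i, (n i : ℝ) • P i) :
    ∀ k : ℕ, 0 < k → ∀ α ∈ (k : ℝ) • Q, (∀ j, ∃ z : ℤ, α j = (z : ℝ)) →
      ∃ f : Fin k → (Fin N → ℝ),
        (∀ t, f t ∈ Q ∧ ∀ j, ∃ z : ℤ, f t j = (z : ℝ)) ∧ α = ∑ t, f t := by
  obtain rfl : P = fun i ↦ convexHull ℝ (s i : Set (Fin N → ℝ)) := funext hP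
  subst hQ
  have hdim : ∀ i, Module.finrank ℝ (vectorSpan ℝ (s i : Set (Fin N → ℝ))) ≤ n i := fun i ↦ by
    rw [← direction_affineSpan, ← affineSpan_convexHull, ← hd i]
    exact hn i
  exact hasIDP_sum_smul_convexHull (L := intLattice (Fin N)) hdim hnpos hsint

/-- Theorem 2.3 (a): if `nᵢ ≥ dᵢ` (and `nᵢ ≥ 1`) for all `i`, then the Minkowski sum
`Q = n₁P₁ + ⋯ + n_mP_m` of integral convex polytopes has the integer decomposition
property. -/
theorem minkowski_sum_idp {N m : ℕ}
    (s : Fin m → Finset (Fin N → ℝ)) (hs : ∀ i, (s i).Nonempty)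
    (hsint : ∀ i, ∀ x ∈ s i, ∀ j, ∃ z : ℤ, x j = (z : ℝ))
    (P : Fin m → Set (Fin N → ℝ))
    (hP : ∀ i, P i = convexHull ℝ ((s i : Set (Fin N → ℝ))))
    (d : Fin m → ℕ) (hd : ∀ i, d i = Module.finrank ℝ (affineSpan ℝ (P i)).direction)
    (n : Fin m → ℕ) (hnpos : ∀ i, 0 < n i) (hn : ∀ i, d i ≤ n i)
    (Q : Set (Fin N → ℝ)) (hQ : Q = ∑ i, (n i : ℝ) • P i) :
    ∀ k : ℕ, 0 < k → ∀ α ∈ (k : ℝ) • Q, (∀ j, ∃ z : ℤ, α j = (z : ℝ)) →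
      ∃ f : Fin k → (Fin N → ℝ),
        (∀ t, f t ∈ Q ∧ ∀ j, ∃ z : ℤ, f t j = (z : ℝ)) ∧ α = ∑ t, f t :=
  minkowski_sum_idp_general s hsint P hP d hd n hnpos hn Q hQ
end

section
/- If P ⊂ ℝ^N is an integral convex polytope of dimension d and n ≥ d − 1 is a positive integer, then the dilation nP has the integer decomposition property. -/
/-!
Write a lattice point `x ∈ m • P` as `x = ∑ aᵢ vᵢ` with `aᵢ ≥ 0`, `∑ aᵢ = m`, over affinely
independent lattice points `vᵢ ∈ P`, at most `n + 2` of them as `dim P ≤ n + 1` (Carathéodory).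
The fractional parts of the `aᵢ` add up to an integer `r ≤ n + 1`. If `r ≤ n`, raising the
fractional parts by integers `≤ ⌊aᵢ⌋` gives coefficients of total `n`, which split off a lattice
point of `n • P` and leave a lattice point of `(m - n) • P`. If `r = n + 1`, there are `n + 2`
vertices and the weights `1 - fract aᵢ` are positive and sum to `1`, so `∑ (1 - fract aᵢ) vᵢ` is a
lattice point of the simplex other than its vertices. Exchanging it for a suitable vertex gives a
simplex with fewer lattice points that still carries `x`, and we conclude by induction on that
number. Splitting off lattice points of `n • P` one at a time yields the decomposition.
-/

open Set Finset Function Pointwise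

section Hull

variable {ι E : Type*} [Fintype ι] [AddCommGroup E] [Module ℝ E]

lemma mem_convexHull_range_iff {v : ι → E} {x : E} :
    x ∈ convexHull ℝ (range v) ↔ ∃ w ∈ stdSimplex ℝ ι, ∑ i, w i • v i = x := by
  classical
  refine ⟨fun hx => ?_, fun ⟨w, hw, hx⟩ =>
    mem_convexHull_of_exists_fintype w v hw.1 hw.2 mem_range_self hx⟩
  have hv : range v ⊆ Fintype.linearCombination ℝ v '' stdSimplex ℝ ι :=
    range_subset_iff.2 fun i =>
      ⟨Pi.single i 1, single_mem_stdSimplex ℝ i, by simp [Fintype.linearCombination_apply]⟩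
  obtain ⟨w, hw, rfl⟩ := convexHull_min hv ((convex_stdSimplex ℝ ι).linear_image _) hx
  exact ⟨w, hw, Fintype.linearCombination_apply ℝ v w⟩

lemma sum_smul_mem_smul_convexHull [Nonempty ι] {v : ι → E} {a : ι → ℝ} (ha : ∀ i, 0 ≤ a i)
    {c : ℝ} (hc : ∑ i, a i = c) : ∑ i, a i • v i ∈ c • convexHull ℝ (range v) := by
  rcases (hc ▸ sum_nonneg fun i _ => ha i : 0 ≤ c).eq_or_lt with rfl | hc₀
  · have : ∀ i, a i = 0 := fun i =>
      (sum_eq_zero_iff_of_nonneg fun i _ => ha i).1 hc i (mem_univ i)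
    simp [this, zero_smul_set ((range_nonempty v).convexHull)]
  · refine ⟨∑ i, (a i / c) • v i, mem_convexHull_range_iff.2
      ⟨_, ⟨fun i => div_nonneg (ha i) hc₀.le, by rw [← sum_div, hc, div_self hc₀.ne']⟩, rfl⟩, ?_⟩
    simp [smul_sum, smul_smul, mul_div_cancel₀ _ hc₀.ne']

end Hull

section Exchange

variable {ι E : Type*} [Fintype ι] [DecidableEq ι] [AddCommGroup E] [Module ℝ E]

lemma sum_smul_update_sum_smul (v : ι → E) (t w : ι → ℝ) (j : ι) :
    ∑ i, w i • update v j (∑ k, t k • v k) i = ∑ i, (update w j 0 i + w j * t i) • v i := by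
  have hL : ∀ i, w i • update v j (∑ k, t k • v k) i =
      update (fun i => w i • v i) j (w j • ∑ k, t k • v k) i := by
    intro i; rcases eq_or_ne i j with rfl | h <;> simp [*]
  have hR : ∀ i, update w j 0 i • v i = update (fun i => w i • v i) j 0 i := by
    intro i; rcases eq_or_ne i j with rfl | h <;> simp [*]
  simp only [hL, add_smul, sum_add_distrib, hR, mul_smul, ← smul_sum,
    sum_update_of_mem (mem_univ j), zero_add, add_comm]

lemma sum_update_zero_add_mul {t : ι → ℝ} (ht : ∑ i, t i = 1) (w : ι → ℝ) (j : ι) :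
    ∑ i, (update w j 0 i + w j * t i) = ∑ i, w i := by
  rw [sum_add_distrib, ← mul_sum, ht, mul_one, sum_update_of_mem (mem_univ j),
    Fintype.sum_eq_add_sum_compl j w, Finset.compl_eq_univ_sdiff]
  ring

variable {v : ι → E} {t : ι → ℝ} {j : ι}

theorem AffineIndependent.update_sum_smul (hv : AffineIndependent ℝ v) (ht : ∑ i, t i = 1)
    (htj : t j ≠ 0) : AffineIndependent ℝ (update v j (∑ k, t k • v k)) := by
  rw [affineIndependent_iff_of_fintype]
  intro w hw hwv i
  rw [Finset.weightedVSub_eq_linear_combination _ hw, sum_smul_update_sum_smul] at hwv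
  have h := hv.eq_zero_of_sum_eq_zero (s := univ) (by rwa [sum_update_zero_add_mul ht]) hwv
  have hwj : w j = 0 := by simpa [htj] using h j (mem_univ j)
  rcases eq_or_ne i j with rfl | hij
  · exact hwj
  · simpa [hij, hwj] using h i (mem_univ i)

lemma convexHull_range_update_sum_smul_subset (ht₀ : ∀ i, 0 ≤ t i) (ht : ∑ i, t i = 1) :
    convexHull ℝ (range (update v j (∑ k, t k • v k))) ⊆ convexHull ℝ (range v) :=
  convexHull_min (range_subset_iff.2 <| (forall_update_iff v (fun _ y => y ∈ _)).2
    ⟨mem_convexHull_range_iff.2 ⟨t, ⟨ht₀, ht⟩, rfl⟩, fun i _ => subset_convexHull ℝ _ ⟨i, rfl⟩⟩)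
    (convex_convexHull ℝ _)

lemma notMem_convexHull_range_update_sum_smul (hv : AffineIndependent ℝ v) (ht : ∑ i, t i = 1)
    (htj : t j < 1) : v j ∉ convexHull ℝ (range (update v j (∑ k, t k • v k))) := by
  intro hmem
  obtain ⟨u, ⟨hu₀, hu₁⟩, hu⟩ := mem_convexHull_range_iff.1 hmem
  rw [sum_smul_update_sum_smul] at hu
  have h := hv.eq_of_sum_eq_sum (s := univ) (w₂ := Pi.single j 1)
    (by rw [sum_update_zero_add_mul ht u j, hu₁]; simp) (by rw [hu]; simp) j (mem_univ j)
  have huj : u j ≤ 1 := hu₁ ▸ single_le_sum (fun i _ => hu₀ i) (mem_univ j)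
  simp only [update_self, zero_add, Pi.single_eq_same] at h
  have huj₀ : 0 < u j := (hu₀ j).lt_of_ne (by rintro h0; simp [← h0] at h)
  nlinarith

lemma exists_weights_update_sum_smul {a : ι → ℝ} (ha : ∀ i, 0 ≤ a i) (ht₀ : ∀ i, 0 < t i)
    (ht : ∑ i, t i = 1) (hj : ∀ i, a j / t j ≤ a i / t i) :
    ∃ a' : ι → ℝ, (∀ i, 0 ≤ a' i) ∧ ∑ i, a' i = ∑ i, a i ∧
      ∑ i, a' i • update v j (∑ k, t k • v k) i = ∑ i, a i • v i := by
  set θ := a j / t j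
  set a' := update (fun i => a i - θ * t i) j θ
  have ha' : ∀ i, update a' j 0 i + a' j * t i = a i := by
    intro i
    rcases eq_or_ne i j with rfl | hij
    · simp [a', θ, div_mul_cancel₀ _ (ht₀ i).ne']
    · simp [a', hij]
  refine ⟨a', fun i => ?_, ?_, ?_⟩
  · rcases eq_or_ne i j with rfl | hij
    · simpa [a'] using div_nonneg (ha i) (ht₀ i).le
    · simpa [a', hij, ← le_div_iff₀ (ht₀ i)] using hj i
  · simp only [← sum_update_zero_add_mul ht a' j, ha']
  · simp only [sum_smul_update_sum_smul, ha']

end Exchange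

lemma Fintype.exists_le_sum_eq {ι : Type*} [Fintype ι] (g : ι → ℕ) {M : ℕ}
    (hM : M ≤ ∑ i, g i) : ∃ h ≤ g, ∑ i, h i = M := by
  classical
  induction M with
  | zero => exact ⟨0, fun i => Nat.zero_le _, by simp⟩
  | succ M ih =>
    obtain ⟨h, hle, rfl⟩ := ih (by omega)
    obtain ⟨i, -, hi⟩ := exists_lt_of_sum_lt (s := univ) (by omega : ∑ i, h i < ∑ i, g i)
    refine ⟨h + Pi.single i 1, fun k => ?_, by simp [sum_add_distrib]⟩
    rcases eq_or_ne k i with rfl | hk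
    · simpa using hi
    · simpa [hk] using hle k

section Lattice

variable {ι E : Type*} [Fintype ι] [AddCommGroup E] [Module ℝ E] (Λ : AddSubgroup E)
  {v : ι → E}

lemma sum_natCast_smul_mem (hv : ∀ i, v i ∈ Λ) (b : ι → ℕ) : ∑ i, (b i : ℝ) • v i ∈ Λ :=
  sum_mem fun i _ => by rw [Nat.cast_smul_eq_nsmul]; exact nsmul_mem (hv i) _

variable [Nonempty ι] {a : ι → ℝ} {m n : ℕ}

lemma exists_sub_mem_smul_convexHull_of_le_sum_floor (hvΛ : ∀ i, v i ∈ Λ) (ha : ∀ i, 0 ≤ a i)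
    (hsum : ∑ i, a i = m) (hx : ∑ i, a i • v i ∈ Λ) (hnm : n ≤ m)
    (hfl : m ≤ ∑ i, ⌊a i⌋₊ + n) :
    ∃ y ∈ Λ, y ∈ (n : ℝ) • convexHull ℝ (range v) ∧
      ∑ i, a i • v i - y ∈ ((m - n : ℕ) : ℝ) • convexHull ℝ (range v) := by
  obtain ⟨h, hh, hhsum⟩ := Fintype.exists_le_sum_eq (fun i => ⌊a i⌋₊)
    (M := ∑ i, ⌊a i⌋₊ + n - m) (by omega)
  set b : ι → ℕ := fun i => ⌊a i⌋₊ - h i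
  have hb : ∑ i, b i = m - n := by rw [sum_tsub_distrib _ fun i _ => hh i]; omega
  have hba : ∀ i, (b i : ℝ) ≤ a i :=
    fun i => (Nat.cast_le.2 (Nat.sub_le _ _)).trans (Nat.floor_le (ha i))
  refine ⟨∑ i, a i • v i - ∑ i, (b i : ℝ) • v i, sub_mem hx (sum_natCast_smul_mem Λ hvΛ b),
    ?_, ?_⟩
  · rw [← sum_sub_distrib]
    simp_rw [← sub_smul]
    refine sum_smul_mem_smul_convexHull (fun i => sub_nonneg.2 (hba i)) ?_
    rw [sum_sub_distrib, hsum, ← Nat.cast_sum, hb, Nat.cast_sub hnm]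
    ring
  · rw [sub_sub_cancel]
    exact sum_smul_mem_smul_convexHull (fun i => (b i).cast_nonneg) (by rw [← Nat.cast_sum, hb])

lemma exists_pos_weights_of_sum_floor_lt (hvΛ : ∀ i, v i ∈ Λ) (hsum : ∑ i, a i = m)
    (hx : ∑ i, a i • v i ∈ Λ) (hcard : Fintype.card ι ≤ n + 2) (hfl : ∑ i, ⌊a i⌋₊ + n < m) :
    ∃ t : ι → ℝ, (∀ i, 0 < t i) ∧ (∀ i, t i < 1) ∧ ∑ i, t i = 1 ∧ ∑ i, t i • v i ∈ Λ := by
  set t : ι → ℝ := fun i => ⌊a i⌋₊ + 1 - a i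
  have ht₀ : ∀ i, 0 < t i := fun i => sub_pos.2 (Nat.lt_floor_add_one _)
  have hlt : m < ∑ i, ⌊a i⌋₊ + Fintype.card ι := by
    have := sum_lt_sum_of_nonempty univ_nonempty fun i _ => Nat.lt_floor_add_one (a i)
    rw [hsum, sum_add_distrib] at this
    simp only [sum_const, card_univ, nsmul_one] at this
    exact_mod_cast this
  have ht : ∑ i, t i = 1 := by
    have : ∑ i, ⌊a i⌋₊ + Fintype.card ι = m + 1 := by omega
    have := congrArg (Nat.cast : ℕ → ℝ) this
    push_cast at this
    simp only [t, sum_sub_distrib, sum_add_distrib, hsum, sum_const, card_univ, nsmul_one]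
    linarith
  refine ⟨t, ht₀, fun i => ?_, ht, ?_⟩
  · obtain ⟨k, hk⟩ := Fintype.exists_ne_of_one_lt_card (by omega) i
    exact ht ▸ single_lt_sum hk (mem_univ i) (mem_univ k) (ht₀ k) fun l _ _ => (ht₀ l).le
  · have : ∑ i, t i • v i = ∑ i, ((⌊a i⌋₊ + 1 : ℕ) : ℝ) • v i - ∑ i, a i • v i := by
      rw [← sum_sub_distrib]
      simp_rw [← sub_smul]
      push_cast
      rfl
    rw [this]
    exact sub_mem (sum_natCast_smul_mem Λ hvΛ _) hx

theorem exists_sub_mem_smul_convexHull_of_affineIndependent (hnm : n ≤ m)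
    (hcard : Fintype.card ι ≤ n + 2) (hv : AffineIndependent ℝ v) (hvΛ : ∀ i, v i ∈ Λ)
    (hfin : (convexHull ℝ (range v) ∩ Λ).Finite) (ha : ∀ i, 0 ≤ a i) (hsum : ∑ i, a i = m)
    (hx : ∑ i, a i • v i ∈ Λ) :
    ∃ y ∈ Λ, y ∈ (n : ℝ) • convexHull ℝ (range v) ∧
      ∑ i, a i • v i - y ∈ ((m - n : ℕ) : ℝ) • convexHull ℝ (range v) := by
  classical
  induction hc : (convexHull ℝ (range v) ∩ Λ).ncard using Nat.strong_induction_on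
    generalizing v a with
  | _ c ih =>
  by_cases hfl : m ≤ ∑ i, ⌊a i⌋₊ + n
  · exact exists_sub_mem_smul_convexHull_of_le_sum_floor Λ hvΛ ha hsum hx hnm hfl
  obtain ⟨t, ht₀, ht₁, ht, htΛ⟩ :=
    exists_pos_weights_of_sum_floor_lt Λ hvΛ hsum hx hcard (not_le.1 hfl)
  obtain ⟨j, hj⟩ := Finite.exists_min fun i => a i / t i
  obtain ⟨a', ha'₀, ha'sum, ha'v⟩ := exists_weights_update_sum_smul (v := v) ha ht₀ ht hj
  have hsub := convexHull_range_update_sum_smul_subset (v := v) (j := j) (fun i => (ht₀ i).le) ht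
  have hssub : convexHull ℝ (range (update v j (∑ k, t k • v k))) ∩ Λ ⊂
      convexHull ℝ (range v) ∩ Λ :=
    ⟨inter_subset_inter_left _ hsub, fun h => notMem_convexHull_range_update_sum_smul hv ht
      (ht₁ j) (h ⟨subset_convexHull ℝ _ (mem_range_self j), hvΛ j⟩).1⟩
  obtain ⟨y, hyΛ, hy, hxy⟩ := ih _ (hc ▸ ncard_lt_ncard hssub hfin)
    (hv.update_sum_smul ht (ht₀ j).ne')
    ((forall_update_iff v (fun _ y => y ∈ Λ)).2 ⟨htΛ, fun i _ => hvΛ i⟩)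
    (hfin.subset hssub.subset) ha'₀ (ha'sum.trans hsum) (ha'v ▸ hx) rfl
  rw [ha'v] at hxy
  exact ⟨y, hyΛ, smul_set_mono hsub hy, smul_set_mono hsub hxy⟩

end Lattice

section Polytope

variable {E : Type*} [AddCommGroup E] [Module ℝ E] (Λ : AddSubgroup E) {s : Finset E} {n : ℕ}

theorem exists_sub_mem_smul_convexHull_s7 (hsΛ : ∀ x ∈ s, x ∈ Λ)
    (hfin : (convexHull ℝ (s : Set E) ∩ Λ).Finite)
    (hdim : Module.finrank ℝ (vectorSpan ℝ (s : Set E)) ≤ n + 1) {m : ℕ} (hnm : n ≤ m) {x : E}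
    (hxΛ : x ∈ Λ) (hx : x ∈ (m : ℝ) • convexHull ℝ (s : Set E)) :
    ∃ y ∈ Λ, y ∈ (n : ℝ) • convexHull ℝ (s : Set E) ∧
      x - y ∈ ((m - n : ℕ) : ℝ) • convexHull ℝ (s : Set E) := by
  obtain ⟨p, hp, rfl⟩ := mem_smul_set.1 hx
  obtain ⟨ι, _, z, w, hzs, hz, hw₀, hw₁, rfl⟩ := eq_pos_convex_span_of_mem_convexHull hp
  have : Nonempty ι := by
    by_contra h
    simp [not_nonempty_iff.1 h] at hw₁
  have hsub : convexHull ℝ (range z) ⊆ convexHull ℝ (s : Set E) := convexHull_mono hzs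
  have hcard : Fintype.card ι ≤ n + 2 := by
    have := finiteDimensional_vectorSpan_of_finite ℝ s.finite_toSet
    have := Submodule.finrank_mono (vectorSpan_mono ℝ hzs)
    have := hz.finrank_vectorSpan_add_one
    omega
  have hmz : (m : ℝ) • ∑ i, w i • z i = ∑ i, (m * w i) • z i := by simp [smul_sum, smul_smul]
  rw [hmz] at hxΛ ⊢
  obtain ⟨y, hyΛ, hy, hxy⟩ := exists_sub_mem_smul_convexHull_of_affineIndependent Λ hnm hcard hz
    (fun i => hsΛ _ (hzs ⟨i, rfl⟩)) (hfin.subset (inter_subset_inter_left _ hsub))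
    (fun i => mul_nonneg m.cast_nonneg (hw₀ i).le) (by rw [← mul_sum, hw₁, mul_one]) hxΛ
  exact ⟨y, hyΛ, smul_set_mono hsub hy, smul_set_mono hsub hxy⟩

theorem exists_fin_sum_eq_of_mem_smul_convexHull (hsΛ : ∀ x ∈ s, x ∈ Λ)
    (hfin : (convexHull ℝ (s : Set E) ∩ Λ).Finite)
    (hdim : Module.finrank ℝ (vectorSpan ℝ (s : Set E)) ≤ n + 1) {k : ℕ} (hk : 0 < k) {x : E}
    (hxΛ : x ∈ Λ) (hx : x ∈ ((k * n : ℕ) : ℝ) • convexHull ℝ (s : Set E)) :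
    ∃ f : Fin k → E,
      (∀ t, f t ∈ Λ ∧ f t ∈ (n : ℝ) • convexHull ℝ (s : Set E)) ∧ x = ∑ t, f t := by
  induction k, hk using Nat.le_induction generalizing x with
  | base => exact ⟨fun _ => x, fun _ => ⟨hxΛ, by simpa using hx⟩, by simp⟩
  | succ k hk ih =>
    obtain ⟨y, hyΛ, hy, hxy⟩ :=
      exists_sub_mem_smul_convexHull_s7 Λ hsΛ hfin hdim (Nat.le_mul_of_pos_left n k.succ_pos) hxΛ hx
    obtain ⟨f, hf, hfx⟩ := ih (sub_mem hxΛ hyΛ) (by simpa [add_mul] using hxy)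
    exact ⟨Fin.cons y f, Fin.cases ⟨hyΛ, hy⟩ hf, by rw [Fin.sum_cons, ← hfx, add_sub_cancel]⟩

end Polytope

def intPoints (N : ℕ) : AddSubgroup (Fin N → ℝ) where
  carrier := {x | ∀ j, ∃ z : ℤ, x j = z}
  zero_mem' j := ⟨0, by simp⟩
  add_mem' hx hy j := by
    obtain ⟨a, ha⟩ := hx j
    obtain ⟨b, hb⟩ := hy j
    exact ⟨a + b, by simp [ha, hb]⟩
  neg_mem' hx j := by
    obtain ⟨a, ha⟩ := hx j
    exact ⟨-a, by simp [ha]⟩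

lemma finite_inter_intPoints {N : ℕ} {S : Set (Fin N → ℝ)} (hS : Bornology.IsBounded S) :
    (S ∩ intPoints N).Finite := by
  set f := Pi.map fun _ : Fin N => ((↑) : ℤ → ℝ)
  have hf : Isometry f := .piMap _ fun _ => Real.isometry_intCast
  refine ((hf.antilipschitz.isBounded_preimage hS).isCompact_closure.finite_of_discrete.image
    f).subset ?_
  rintro x ⟨hxS, hx⟩
  choose q hq using hx
  have hqx : f q = x := funext fun j => (hq j).symm
  exact ⟨q, subset_closure (show f q ∈ S from hqx ▸ hxS), hqx⟩

theorem dilation_idp_general {N : ℕ}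
    (s : Finset (Fin N → ℝ))
    (hsint : ∀ x ∈ s, ∀ j, ∃ z : ℤ, x j = (z : ℝ))
    (P : Set (Fin N → ℝ)) (hP : P = convexHull ℝ (s : Set (Fin N → ℝ)))
    (d : ℕ) (hd : d = Module.finrank ℝ (affineSpan ℝ P).direction)
    (n : ℕ) (hn : d ≤ n + 1) :
    ∀ k : ℕ, 0 < k → ∀ α ∈ (k : ℝ) • ((n : ℝ) • P), (∀ j, ∃ z : ℤ, α j = (z : ℝ)) →
      ∃ f : Fin k → (Fin N → ℝ),
        (∀ t, f t ∈ (n : ℝ) • P ∧ ∀ j, ∃ z : ℤ, f t j = (z : ℝ)) ∧ α = ∑ t, f t := by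
  intro k hk α hα hαint
  subst hP hd
  rw [affineSpan_convexHull, direction_affineSpan] at hn
  rw [smul_smul, ← Nat.cast_mul] at hα
  have hfin := finite_inter_intPoints (s.finite_toSet.isCompact_convexHull (𝕜 := ℝ)).isBounded
  obtain ⟨f, hf, rfl⟩ :=
    exists_fin_sum_eq_of_mem_smul_convexHull (intPoints N) hsint hfin hn hk hαint hα
  exact ⟨f, fun t => (hf t).symm, rfl⟩

/-- Bruns–Gubeladze–Trung: if `P ⊂ ℝ^N` is an integral convex polytope of dimension `d`
and `n ≥ d - 1` is a positive integer, then the dilation `nP` has the integer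
decomposition property. -/
theorem dilation_idp {N : ℕ}
    (s : Finset (Fin N → ℝ)) (hs : s.Nonempty)
    (hsint : ∀ x ∈ s, ∀ j, ∃ z : ℤ, x j = (z : ℝ))
    (P : Set (Fin N → ℝ)) (hP : P = convexHull ℝ (s : Set (Fin N → ℝ)))
    (d : ℕ) (hd : d = Module.finrank ℝ (affineSpan ℝ P).direction)
    (n : ℕ) (hnpos : 0 < n) (hn : d ≤ n + 1) :
    ∀ k : ℕ, 0 < k → ∀ α ∈ (k : ℝ) • ((n : ℝ) • P), (∀ j, ∃ z : ℤ, α j = (z : ℝ)) →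
      ∃ f : Fin k → (Fin N → ℝ),
        (∀ t, f t ∈ (n : ℝ) • P ∧ ∀ j, ∃ z : ℤ, f t j = (z : ℝ)) ∧ α = ∑ t, f t :=
  dilation_idp_general s hsint P hP d hd n hn
end

section
/- Let P₁ = conv{e₁+e₂, e₃+e₄, e₅+e₆} and P₂ = conv{e₁+e₆, e₂+e₃, e₄+e₅} in ℝ⁶, where e_i are standard basis vectors. For every integer n ≥ 2, the point (2n, 2n, 1, 1, 1, 1) lies in 2(nP₁ + P₂) ∩ ℤ⁶ but is not the sum of two lattice points of nP₁ + P₂; hence nP₁ + P₂ does not have the integer decomposition property. -/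
/-! A point of `t P₁ + P₂` is `cycleVec A₁ A₂ A₃ β₁ β₂ β₃`, with coordinates `Aᵢ + βⱼ` around the
6-cycle, and the `P₂`-weights are read off from coordinate differences: `β₁ - β₂ = x₁ - x₂`,
`β₂ - β₃ = x₃ - x₄`. If `a + b = (p, p, 1, 1, 1, 1)` these differences cancel between `a` and `b`, so
`β + γ = (2/3, 2/3, 2/3)`. For lattice points the differences `βᵢ - βⱼ` are integers of absolute
value at most `2/3`, hence `β = γ = (1/3, 1/3, 1/3)`; then `a₃ = A₂ + 1/3` and `b₃ = B₂ + 1/3` are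
positive integers, contradicting `a₃ + b₃ = 1`. -/

open Pointwise

section ConvexHullTriple

variable {𝕜 E : Type*} [Field 𝕜] [LinearOrder 𝕜] [IsStrictOrderedRing 𝕜]
  [AddCommGroup E] [Module 𝕜 E]

theorem mem_convexHull_triple_iff {u v w x : E} :
    x ∈ convexHull 𝕜 {u, v, w} ↔
      ∃ α β γ : 𝕜, 0 ≤ α ∧ 0 ≤ β ∧ 0 ≤ γ ∧ α + β + γ = 1 ∧ α • u + β • v + γ • w = x := by
  constructor
  · rw [convexHull_insert (Set.insert_nonempty v {w}), convexHull_pair, mem_convexJoin]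
    rintro ⟨_, rfl, _, ⟨p, q, hp, hq, hpq, rfl⟩, s, t, hs, ht, hst, rfl⟩
    exact ⟨s, t * p, t * q, hs, mul_nonneg ht hp, mul_nonneg ht hq,
      by linear_combination hst + t * hpq, by module⟩
  · rintro ⟨α, β, γ, hα, hβ, hγ, hsum, rfl⟩
    have := (convex_convexHull 𝕜 {u, v, w}).sum_mem (t := Finset.univ) (w := ![α, β, γ])
      (z := ![u, v, w]) (by simp [Fin.forall_fin_succ, hα, hβ, hγ])
      (by simp [Fin.sum_univ_three, hsum])
      (by simp [Fin.forall_fin_succ, subset_convexHull 𝕜 _ _])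
    simpa [Fin.sum_univ_three] using this

end ConvexHullTriple

theorem eq_of_abs_sub_lt_one_of_intCast {x y : ℝ} (hx : ∃ m : ℤ, x = m) (hy : ∃ n : ℤ, y = n)
    (h : |x - y| < 1) : x = y := by
  obtain ⟨m, rfl⟩ := hx
  obtain ⟨n, rfl⟩ := hy
  have : |m - n| < 1 := by exact_mod_cast h
  rw [Int.abs_lt_one_iff, sub_eq_zero] at this
  rw [this]

theorem one_le_of_pos_of_intCast {x : ℝ} (hx : ∃ m : ℤ, x = m) (h : 0 < x) : 1 ≤ x := by
  obtain ⟨m, rfl⟩ := hx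
  exact_mod_cast Int.cast_pos.mp h

def matchingSimplex₁ : Set (Fin 6 → ℝ) :=
  convexHull ℝ {![1,1,0,0,0,0], ![0,0,1,1,0,0], ![0,0,0,0,1,1]}

def matchingSimplex₂ : Set (Fin 6 → ℝ) :=
  convexHull ℝ {![1,0,0,0,0,1], ![0,1,1,0,0,0], ![0,0,0,1,1,0]}

def cycleVec (A₁ A₂ A₃ β₁ β₂ β₃ : ℝ) : Fin 6 → ℝ :=
  ![A₁ + β₁, A₁ + β₂, A₂ + β₂, A₂ + β₃, A₃ + β₃, A₃ + β₁]

theorem cycleVec_eq (A₁ A₂ A₃ β₁ β₂ β₃ : ℝ) :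
    cycleVec A₁ A₂ A₃ β₁ β₂ β₃ =
      (A₁ • ![1,1,0,0,0,0] + A₂ • ![0,0,1,1,0,0] + A₃ • ![0,0,0,0,1,1]) +
        (β₁ • ![1,0,0,0,0,1] + β₂ • ![0,1,1,0,0,0] + β₃ • ![0,0,0,1,1,0]) := by
  funext i
  fin_cases i <;> simp [cycleVec]

theorem mem_smul_matchingSimplex₁_add_iff {t : ℝ} (ht : 0 < t) {x : Fin 6 → ℝ} :
    x ∈ t • matchingSimplex₁ + matchingSimplex₂ ↔
      ∃ A₁ A₂ A₃ β₁ β₂ β₃ : ℝ, 0 ≤ A₁ ∧ 0 ≤ A₂ ∧ 0 ≤ A₃ ∧ A₁ + A₂ + A₃ = t ∧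
        0 ≤ β₁ ∧ 0 ≤ β₂ ∧ 0 ≤ β₃ ∧ β₁ + β₂ + β₃ = 1 ∧ cycleVec A₁ A₂ A₃ β₁ β₂ β₃ = x := by
  simp only [Set.mem_add, Set.mem_smul_set, matchingSimplex₁, matchingSimplex₂,
    mem_convexHull_triple_iff]
  constructor
  · rintro ⟨_, ⟨_, ⟨α₁, α₂, α₃, hα₁, hα₂, hα₃, hα, rfl⟩, rfl⟩, _,
      ⟨β₁, β₂, β₃, hβ₁, hβ₂, hβ₃, hβ, rfl⟩, rfl⟩
    refine ⟨t * α₁, t * α₂, t * α₃, β₁, β₂, β₃, by positivity, by positivity, by positivity,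
      by linear_combination t * hα, hβ₁, hβ₂, hβ₃, hβ, ?_⟩
    rw [cycleVec_eq]
    module
  · rintro ⟨A₁, A₂, A₃, β₁, β₂, β₃, hA₁, hA₂, hA₃, hA, hβ₁, hβ₂, hβ₃, hβ, rfl⟩
    refine ⟨_, ⟨_, ⟨A₁ / t, A₂ / t, A₃ / t, by positivity, by positivity, by positivity,
      by field_simp; linarith, rfl⟩, rfl⟩, _, ⟨β₁, β₂, β₃, hβ₁, hβ₂, hβ₃, hβ, rfl⟩, ?_⟩
    rw [cycleVec_eq]
    congr 1
    simp only [smul_add, smul_smul, mul_div_cancel₀ _ ht.ne']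

theorem add_ne_of_mem_smul_matchingSimplex₁_add {t : ℝ} (ht : 0 < t) (p : ℝ) {a b : Fin 6 → ℝ}
    (ha : a ∈ t • matchingSimplex₁ + matchingSimplex₂)
    (hb : b ∈ t • matchingSimplex₁ + matchingSimplex₂)
    (haℤ : ∀ j, ∃ z : ℤ, a j = z) (hbℤ : ∀ j, ∃ z : ℤ, b j = z) :
    a + b ≠ ![p, p, 1, 1, 1, 1] := by
  obtain ⟨A₁, A₂, A₃, β₁, β₂, β₃, -, hA₂, -, -, hβ₁, hβ₂, hβ₃, hβ, rfl⟩ :=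
    (mem_smul_matchingSimplex₁_add_iff ht).1 ha
  obtain ⟨B₁, B₂, B₃, γ₁, γ₂, γ₃, -, hB₂, -, -, hγ₁, hγ₂, hγ₃, hγ, rfl⟩ :=
    (mem_smul_matchingSimplex₁_add_iff ht).1 hb
  intro hsum
  have h₀ : A₁ + β₁ + (B₁ + γ₁) = p := congrFun hsum 0
  have h₁ : A₁ + β₂ + (B₁ + γ₂) = p := congrFun hsum 1
  have h₂ : A₂ + β₂ + (B₂ + γ₂) = 1 := congrFun hsum 2
  have h₃ : A₂ + β₃ + (B₂ + γ₃) = 1 := congrFun hsum 3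
  have hβγ₁ : β₁ + γ₁ = 2 / 3 := by linarith
  have hβγ₂ : β₂ + γ₂ = 2 / 3 := by linarith
  have hβγ₃ : β₃ + γ₃ = 2 / 3 := by linarith
  have hβ₁₂ : A₁ + β₁ = A₁ + β₂ :=
    eq_of_abs_sub_lt_one_of_intCast (haℤ 0) (haℤ 1) (by rw [abs_lt]; constructor <;> linarith)
  have hβ₂₃ : A₂ + β₂ = A₂ + β₃ :=
    eq_of_abs_sub_lt_one_of_intCast (haℤ 2) (haℤ 3) (by rw [abs_lt]; constructor <;> linarith)
  have ha₂ : 1 ≤ A₂ + β₂ := one_le_of_pos_of_intCast (haℤ 2) (by linarith)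
  have hb₂ : 1 ≤ B₂ + γ₂ := one_le_of_pos_of_intCast (hbℤ 2) (by linarith)
  linarith

theorem two_smul_cycleVec_eq (n : ℝ) :
    (2 : ℝ) • cycleVec (n - 1 / 3) (1 / 6) (1 / 6) (1 / 3) (1 / 3) (1 / 3) =
      ![2 * n, 2 * n, 1, 1, 1, 1] := by
  funext i
  fin_cases i <;> simp [cycleVec] <;> ring

/-- Remark 2.6: for every `n ≥ 2` the point `(2n, 2n, 1, 1, 1, 1)` is a lattice point of
`2(nP₁ + P₂)` which is not a sum of two lattice points of `nP₁ + P₂`; hence `nP₁ + P₂`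
does not have IDP. -/
theorem remark_not_idp
    (P₁ P₂ : Set (Fin 6 → ℝ))
    (hP₁ : P₁ = convexHull ℝ {![1,1,0,0,0,0], ![0,0,1,1,0,0], ![0,0,0,0,1,1]})
    (hP₂ : P₂ = convexHull ℝ {![1,0,0,0,0,1], ![0,1,1,0,0,0], ![0,0,0,1,1,0]})
    (n : ℕ) (hn : 2 ≤ n) :
    (![(2*n : ℝ), 2*n, 1, 1, 1, 1]) ∈ (2 : ℝ) • ((n : ℝ) • P₁ + P₂) ∧
    ¬ ∃ a b : Fin 6 → ℝ, a ∈ (n : ℝ) • P₁ + P₂ ∧ b ∈ (n : ℝ) • P₁ + P₂ ∧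
        (∀ j, ∃ z : ℤ, a j = (z : ℝ)) ∧ (∀ j, ∃ z : ℤ, b j = (z : ℝ)) ∧
        (![(2*n : ℝ), 2*n, 1, 1, 1, 1]) = a + b := by
  subst hP₁ hP₂
  have hn' : (2 : ℝ) ≤ n := by exact_mod_cast hn
  have hn₀ : (0 : ℝ) < n := by linarith
  constructor
  · refine Set.mem_smul_set.2 ⟨_, (mem_smul_matchingSimplex₁_add_iff hn₀).2
      ⟨n - 1 / 3, 1 / 6, 1 / 6, 1 / 3, 1 / 3, 1 / 3, by linarith, by norm_num, by norm_num,
        by ring, by norm_num, by norm_num, by norm_num, by norm_num, rfl⟩, two_smul_cycleVec_eq n⟩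
  · rintro ⟨a, b, ha, hb, haℤ, hbℤ, hsum⟩
    exact add_ne_of_mem_smul_matchingSimplex₁_add hn₀ _ ha hb haℤ hbℤ hsum.symm
end

section
/- Let G be a connected simple graph on vertex set {1,…,d}. Then the edge polytope P_G has dimension d − 2 if G is bipartite, and dimension d − 1 if G is not bipartite. -/
open Pointwise

/-- `ρ({i,j}) = e_i + e_j`: the 0/1 indicator vector of an edge. -/
def edgeVec {d : ℕ} (e : Sym2 (Fin d)) : Fin d → ℝ :=
  fun t => if t ∈ e then 1 else 0

/-- The edge polytope of a graph `G` on `{1, …, d}`. -/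
def edgePolytope {d : ℕ} (G : SimpleGraph (Fin d)) : Set (Fin d → ℝ) :=
  convexHull ℝ (edgeVec '' G.edgeSet)

/-!
The direction of the affine hull is the span `D` of the differences of edge vectors. Along a
walk from `i` to `j`, `e_i - e_j ∈ D` if the walk is even, and `e_i + e_j - e_a - e_b ∈ D` for
every edge `ab` if it is odd. So in the bipartite case every vertex is congruent modulo `D` to an
end of one fixed edge, and in the non-bipartite case (using an odd closed walk) to one fixed
vertex. Conversely `D` lies in the kernel of the coordinate sums over the colour classes, resp. of
the total coordinate sum, since these are constant on edge vectors. A subspace inside the kernel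
of a surjection onto `ℝᵏ` and spanning the whole space together with `k` vectors has codimension
exactly `k`.
-/

open Module Submodule SimpleGraph

theorem finrank_eq_sub_of_le_ker_of_sup_eq_top {K V W : Type*} [DivisionRing K]
    [AddCommGroup V] [Module K V] [FiniteDimensional K V]
    [AddCommGroup W] [Module K W] [FiniteDimensional K W]
    (L : V →ₗ[K] W) (hL : Function.Surjective L) {D U : Submodule K V}
    (hD : D ≤ LinearMap.ker L) (hU : D ⊔ U = ⊤) (hUW : finrank K U ≤ finrank K W) :
    finrank K D = finrank K V - finrank K W := by
  have h_rank_nullity := L.finrank_range_add_finrank_ker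
  rw [LinearMap.range_eq_top.2 hL, finrank_top] at h_rank_nullity
  have h_sup := finrank_add_le_finrank_add_finrank D U
  rw [hU, finrank_top] at h_sup
  have := Submodule.finrank_mono hD
  omega

theorem vectorSpan_le_ker_of_forall_eq {k V W : Type*} [Ring k] [AddCommGroup V] [Module k V]
    [AddCommGroup W] [Module k W] {s : Set V} (L : V →ₗ[k] W) (c : W)
    (h : ∀ p ∈ s, L p = c) : vectorSpan k s ≤ LinearMap.ker L := by
  rw [vectorSpan_def, span_le]
  rintro _ ⟨p, hp, q, hq, rfl⟩
  simp [h p hp, h q hq]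

theorem span_range_single_comp_eq_top {R ι κ : Type*} [Semiring R] [Finite κ] [DecidableEq κ]
    {f : ι → κ} (hf : Function.Surjective f) :
    span R (Set.range fun i => (Pi.single (f i) 1 : κ → R)) = ⊤ := by
  have := (Pi.basisFun R κ).span_eq
  rw [← hf.range_comp] at this
  simpa [Function.comp_def] using this

theorem sup_span_range_single_eq_top {R ι κ : Type*} [Ring R] [Finite ι] [DecidableEq ι]
    {D : Submodule R (ι → R)} (f : ι → κ) (s : κ → ι)
    (h : ∀ i, Pi.single i 1 - Pi.single (s (f i)) 1 ∈ D) :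
    D ⊔ span R (Set.range fun k => (Pi.single (s k) 1 : ι → R)) = ⊤ := by
  rw [eq_top_iff, ← (Pi.basisFun R ι).span_eq, span_le]
  rintro _ ⟨i, rfl⟩
  exact mem_sup.2 ⟨_, h i, _, subset_span ⟨f i, rfl⟩, by simp⟩

variable {d : ℕ} {G : SimpleGraph (Fin d)}

theorem edgeVec_mk {i j : Fin d} (h : i ≠ j) :
    edgeVec s(i, j) = Pi.single i 1 + Pi.single j 1 := by
  ext t
  by_cases hi : t = i <;> by_cases hj : t = j <;> simp_all [edgeVec]

theorem direction_affineSpan_edgePolytope :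
    (affineSpan ℝ (edgePolytope G)).direction = vectorSpan ℝ (edgeVec '' G.edgeSet) := by
  rw [edgePolytope, affineSpan_convexHull, direction_affineSpan]

theorem sub_mem_vectorSpan_edgeVec {i j a b : Fin d} (hij : G.Adj i j) (hab : G.Adj a b) :
    (Pi.single i 1 + Pi.single j 1) - (Pi.single a 1 + Pi.single b 1)
      ∈ vectorSpan ℝ (edgeVec '' G.edgeSet) := by
  rw [← edgeVec_mk hij.ne, ← edgeVec_mk hab.ne]
  exact vsub_mem_vectorSpan ℝ ⟨_, hij, rfl⟩ ⟨_, hab, rfl⟩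

theorem mem_vectorSpan_edgeVec_of_walk {i j : Fin d} (w : G.Walk i j) :
    (Even w.length →
      Pi.single i 1 - Pi.single j 1 ∈ vectorSpan ℝ (edgeVec '' G.edgeSet)) ∧
    (¬ Even w.length → ∀ a b, G.Adj a b →
      (Pi.single i 1 + Pi.single j 1) - (Pi.single a 1 + Pi.single b 1)
        ∈ vectorSpan ℝ (edgeVec '' G.edgeSet)) := by
  induction w with
  | nil => simp
  | @cons i k j hik w ih =>
    rw [Walk.length_cons, Nat.even_add_one, not_not]
    refine ⟨fun hodd => ?_, fun heven a b hab => ?_⟩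
    · convert neg_mem (ih.2 hodd i k hik) using 1
      abel
    · convert sub_mem (sub_mem_vectorSpan_edgeVec hik hab) (ih.1 heven) using 1
      abel

/-- Summing the coordinates over the fibres of `f` is constant on edge vectors by `hc`;
`s` picks a representative of each fibre. -/
theorem finrank_vectorSpan_edgeVec_eq_sub_card {κ : Type*} [Fintype κ] [DecidableEq κ]
    {f : Fin d → κ} (hf : Function.Surjective f) (c : κ → ℝ)
    (hc : ∀ i j, G.Adj i j → Pi.single (f i) 1 + Pi.single (f j) 1 = c) (s : κ → Fin d)
    (hs : ∀ i, Pi.single i 1 - Pi.single (s (f i)) 1 ∈ vectorSpan ℝ (edgeVec '' G.edgeSet)) :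
    finrank ℝ (vectorSpan ℝ (edgeVec '' G.edgeSet)) = d - Fintype.card κ := by
  set L := Fintype.linearCombination ℝ fun i => (Pi.single (f i) 1 : κ → ℝ)
  have hL : Function.Surjective L := by
    rw [← span_range_eq_top_iff_surjective_fintypeLinearCombination]
    exact span_range_single_comp_eq_top hf
  have hD : vectorSpan ℝ (edgeVec '' G.edgeSet) ≤ LinearMap.ker L := by
    refine vectorSpan_le_ker_of_forall_eq L c ?_
    rintro _ ⟨e, he, rfl⟩
    induction e using Sym2.ind with
    | _ i j => simpa [L, edgeVec_mk (G.ne_of_adj he)] using hc i j he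
  simpa using finrank_eq_sub_of_le_ker_of_sup_eq_top L hL hD
    (sup_span_range_single_eq_top f s hs)
    (by rw [finrank_fintype_fun_eq_card]; exact finrank_range_le_card _)

theorem finrank_vectorSpan_edgeVec_of_coloring [Nontrivial (Fin d)] (hG : G.Connected)
    (c : G.Coloring Bool) : finrank ℝ (vectorSpan ℝ (edgeVec '' G.edgeSet)) = d - 2 := by
  obtain ⟨u⟩ := hG.nonempty
  obtain ⟨v, huv⟩ := hG.preconnected.exists_adj_of_nontrivial u
  have hc : Function.Surjective c := by
    intro b
    by_cases hb : c u = b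
    · exact ⟨u, hb⟩
    · have := c.valid huv
      exact ⟨v, by revert this hb; cases c u <;> cases c v <;> cases b <;> decide⟩
  refine finrank_vectorSpan_edgeVec_eq_sub_card hc 1 (fun i j hij => ?_) (Function.surjInv hc)
    (fun i => ?_)
  · have hij := c.valid hij
    generalize c i = x, c j = y at hij
    ext b
    cases x <;> cases y <;> cases b <;> simp_all
  · obtain ⟨p⟩ := hG.preconnected i (Function.surjInv hc (c i))
    refine (mem_vectorSpan_edgeVec_of_walk p).1 ((c.even_length_iff_congr p).2 ?_)
    rw [Function.surjInv_eq hc]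

theorem exists_forall_single_sub_single_mem_vectorSpan_edgeVec (hG : G.Connected)
    (h : ¬ G.Colorable 2) :
    ∃ u, ∀ i, Pi.single i 1 - Pi.single u 1 ∈ vectorSpan ℝ (edgeVec '' G.edgeSet) := by
  rw [two_colorable_iff_forall_loop_even] at h
  push Not at h
  obtain ⟨u, w, hw⟩ := h
  obtain ⟨a, b, hab⟩ : ∃ a b, G.Adj a b := by
    cases w with
    | nil => simp at hw
    | cons h _ => exact ⟨_, _, h⟩
  have hu := (mem_vectorSpan_edgeVec_of_walk w).2 hw a b hab
  refine ⟨u, fun i => ?_⟩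
  obtain ⟨p⟩ := hG.preconnected i u
  by_cases hp : Even p.length
  · exact (mem_vectorSpan_edgeVec_of_walk p).1 hp
  · convert sub_mem ((mem_vectorSpan_edgeVec_of_walk p).2 hp a b hab) hu using 1
    abel

theorem finrank_vectorSpan_edgeVec_of_not_colorable (hG : G.Connected) (h : ¬ G.Colorable 2) :
    finrank ℝ (vectorSpan ℝ (edgeVec '' G.edgeSet)) = d - 1 := by
  obtain ⟨u, hu⟩ := exists_forall_single_sub_single_mem_vectorSpan_edgeVec hG h
  refine finrank_vectorSpan_edgeVec_eq_sub_card (f := fun _ => ()) (fun _ => ⟨u, rfl⟩)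
    (fun _ => 2) (fun _ _ _ => ?_) (fun _ => u) hu
  ext
  norm_num

theorem vectorSpan_edgeVec_eq_bot [Subsingleton (Fin d)] :
    vectorSpan ℝ (edgeVec '' G.edgeSet) = ⊥ := by
  rw [Subsingleton.elim G ⊥]
  simp

/-- Ohsugi–Hibi: the dimension of the edge polytope of a connected graph `G` on `d`
vertices is `d - 2` if `G` is bipartite and `d - 1` otherwise. -/
theorem dim_edgePolytope {d : ℕ} (G : SimpleGraph (Fin d)) (hG : G.Connected) :
    (G.Colorable 2 →
      Module.finrank ℝ (affineSpan ℝ (edgePolytope G)).direction = d - 2) ∧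
    (¬ G.Colorable 2 →
      Module.finrank ℝ (affineSpan ℝ (edgePolytope G)).direction = d - 1) := by
  rw [direction_affineSpan_edgePolytope]
  refine ⟨fun ⟨C⟩ => ?_, finrank_vectorSpan_edgeVec_of_not_colorable hG⟩
  rcases subsingleton_or_nontrivial (Fin d) with hd | hd
  · have : d ≤ 1 := by simpa using Fintype.card_le_one_iff_subsingleton.2 hd
    rw [vectorSpan_edgeVec_eq_bot, finrank_bot]
    omega
  · exact finrank_vectorSpan_edgeVec_of_coloring hG (G.recolorOfEquiv finTwoEquiv C)
end
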